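/- Let k ∈ {0,1,…,d}. Suppose W ⊆ V⊗ℂ^l is translation invariant and #(Ω^{−1}(a) ∩ (−Ω^{−1}(a))) ≤ μ^k − 1 for every a ∈ ℂ^l∖{0}. Suppose moreover that there exists a ∈ ℂ^l∖{0} for which this inequality is an equality and Ω^{−1}(a) = Γ∖{0}, where Γ is a subgroup of G of cardinality μ^k (i.e. of index μ^{d−k}). Then W is a geometric space of order k/d: κ(θ) = (k/d)·(log m)·(1−θ) = k·(log μ)·(1−θ) for all θ ∈ [0,1]. -/

import Mathlib

open MeasureTheory Finset

noncomputable section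

namespace TracePaper

variable {ι : Type} [Fintype ι]
variable {E : Type} [AddCommGroup E] [Module ℝ E]

/-- A martingale adapted to the `ι`-uniform filtration, recorded by its values on atoms:
`val n c` is the value of `F_n` on the atom determined by the digit string `c`. -/
structure Mart (ι : Type) [Fintype ι] (E : Type) [AddCommGroup E] [Module ℝ E] where
  val : (n : ℕ) → (Fin n → ι) → E
  avg_eq : ∀ (n : ℕ) (c : Fin n → ι),
    val n c = (Fintype.card ι : ℝ)⁻¹ • ∑ j : ι, val (n + 1) (Fin.snoc c j)

/-- The martingale difference `dF_{n+1}|_ω` on the atom `ω = c ∈ 𝒜ℱ_n`, as an element of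
`V ⊗ E` (an `ι`-tuple with zero average). -/
def diff (F : Mart ι E) (n : ℕ) (c : Fin n → ι) : ι → E :=
  fun j => F.val (n + 1) (Fin.snoc c j) - F.val n c

/-- `F ∈ 𝕎`: all martingale differences lie in `W`. -/
def MemSpace (W : Set (ι → E)) (F : Mart ι E) : Prop :=
  ∀ (n : ℕ) (c : Fin n → ι), diff F n c ∈ W

/-- A simple martingale: all but finitely many differences vanish. -/
def Simple (F : Mart ι E) : Prop :=
  ∃ N : ℕ, ∀ n, N ≤ n → ∀ c : Fin n → ι, diff F n c = 0

/-- Average of an `ι`-tuple. -/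
def avg (X : ι → E) : E := (Fintype.card ι : ℝ)⁻¹ • ∑ j, X j

/-- The set `𝕄^W` of admissible `0`-flat increments. -/
def MW (W : Set (ι → E)) : Set (ι → ℝ) :=
  {v | (∑ j, v j = 0) ∧ (∀ j, -1 ≤ v j) ∧ ∃ a : E, a ≠ 0 ∧ (fun j => v j • a) ∈ W}

/-- `κ_v(θ) = θ log((1/m) ∑_j |1+v_j|^{1/θ})`, extended by continuity at `θ = 0`. -/
def kappaV (ι : Type) [Fintype ι] (v : ι → ℝ) (θ : ℝ) : ℝ :=
  if θ = 0 then Real.log (⨆ j, |1 + v j|)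
  else θ * Real.log ((Fintype.card ι : ℝ)⁻¹ * ∑ j, |1 + v j| ^ (1 / θ))

/-- `κ(θ) = sup {κ_v(θ) : v ∈ 𝕄^W}`. -/
def kappa (W : Set (ι → E)) (θ : ℝ) : ℝ :=
  sSup {r | ∃ v ∈ MW W, r = kappaV ι v θ}

/-- `κ'(1) = inf { -(1/m) ∑_j (1+v_j) log(1+v_j) : v ∈ 𝕄^W }`. -/
def kprime1 (W : Set (ι → E)) : ℝ :=
  sInf {r | ∃ v ∈ MW W,
    r = -((Fintype.card ι : ℝ)⁻¹ * ∑ j, (1 + v j) * Real.log (1 + v j))}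

/-- `W` is geometric (κ affine) with `α = -κ'(1)/log m`; equivalently
`κ(θ) = α (log m)(1-θ)` on `[0,1]`. -/
def GeometricOfOrder (W : Set (ι → E)) (α : ℝ) : Prop :=
  ∀ θ ∈ Set.Icc (0 : ℝ) 1, kappa W θ = α * Real.log (Fintype.card ι) * (1 - θ)

/-- `w = v ⊗ a` is an extremal vector with support `H`. -/
def IsExtremal (W : Set (ι → E)) (α : ℝ) (w : ι → E) (H : Finset ι) : Prop :=
  w ∈ W ∧ ∃ a : E, a ≠ 0 ∧ (H.card : ℝ) = (Fintype.card ι : ℝ) ^ ((1 : ℝ) - α) ∧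
    (∀ j ∈ H, w j = ((Fintype.card ι : ℝ) ^ α - 1) • a) ∧ ∀ j ∉ H, w j = -a

/-- `φ` is a canceling operator. -/
def Canceling (W : Set (ι → E)) (α : ℝ) (φ : (ι → E) → ι → ℝ) : Prop :=
  ∀ (w : ι → E) (H : Finset ι), IsExtremal W α w H → ∀ j ∈ H, φ w j = 0

/-- `W` is a non-local space (of order `α`). -/
def NonLocal (W : Set (ι → E)) (α : ℝ) : Prop :=
  ∀ (w : ι → E) (H : Finset ι), IsExtremal W α w H →
    ∀ u ∈ W, ∀ b : E, (∀ j ∉ H, b + u j = 0) → ∃ c : ℝ, u = c • w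

/-- The martingale transform `𝕀_α[F]`, as a function of the path `γ ∈ 𝕋`. -/
def Ialpha (φ : (ι → E) → ι → ℝ) (α : ℝ) (F : Mart ι E) (γ : ℕ → ι) : ℝ :=
  ∑' n : ℕ, (Fintype.card ι : ℝ) ^ (-(α * n)) *
    φ (diff F n (fun i : Fin n => γ i)) (γ n)

/-- The cylinder (atom of `ℱ_n`) determined by the digit string `c`. -/
def cyl (n : ℕ) (c : Fin n → ι) : Set (ℕ → ι) := {γ | ∀ i : Fin n, γ i = c i}

/-- The Borel σ-algebra of `𝕋` (= the product σ-algebra). -/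
def treeMS (ι : Type) : MeasurableSpace (ℕ → ι) :=
  @MeasurableSpace.pi ℕ (fun _ => ι) (fun _ => ⊤)

section Normed
variable {E' : Type} [NormedAddCommGroup E'] [NormedSpace ℝ E']

/-- `‖F‖_{L¹} = sup_n 𝔼 |F_n|`. -/
def L1Norm (F : Mart ι E') : ℝ :=
  ⨆ n : ℕ, ((Fintype.card ι : ℝ) ^ n)⁻¹ * ∑ c : Fin n → ι, ‖F.val n c‖

/-- The bilinear trace inequality
`∫_𝕋 |𝕀_α[F]| dν ≲ (sup_{n,ω} m^{(1-α)n} ν(ω)) ‖F‖_{L¹}`. -/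
def TraceIneq (W : Set (ι → E')) (φ : (ι → E') → ι → ℝ) (α : ℝ) : Prop :=
  ∃ C : ℝ, ∀ ν : @Measure (ℕ → ι) (treeMS ι), IsFiniteMeasure ν →
    ∀ F : Mart ι E', MemSpace W F → Simple F →
      ∀ A : ℝ,
        (∀ (n : ℕ) (c : Fin n → ι),
          (Fintype.card ι : ℝ) ^ (((1 : ℝ) - α) * n) * (ν (cyl n c)).toReal ≤ A) →
        ∫ γ, |Ialpha φ α F γ| ∂ν ≤ C * A * L1Norm F

/-- The Bellman main inequality for `G` on the Bellman domain. -/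
def MainInequality (W : Set (ι → E')) (φ : (ι → E') → ι → ℝ) (α : ℝ)
    (G : E' → ℝ → ℝ → ℝ → ℝ → ℝ) : Prop :=
  ∀ (X : ι → E') (y : ℝ) (Z T S : ι → ℝ),
    (∀ j, ‖X j‖ ≤ Z j) → (∀ j, 0 ≤ T j) → (∀ j, T j ≤ S j) →
    (fun j => X j - avg X) ∈ W →
    (Fintype.card ι : ℝ) ^ (-α) *
        ∑ j, G (X j) ((Fintype.card ι : ℝ) ^ α * y + φ (fun i => X i - avg X) j)
          (Z j) (T j) (S j)
      ≤ G (avg X) y ((Fintype.card ι : ℝ)⁻¹ * ∑ j, Z j) (∑ j, T j)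
          (max (∑ j, T j) ((Fintype.card ι : ℝ) ^ ((1 : ℝ) - α) * ⨆ j, S j))

/-- The boundary inequality `G(x, y, |x|, t, s) ≥ |y| t`. -/
def BoundaryIneq (G : E' → ℝ → ℝ → ℝ → ℝ → ℝ) : Prop :=
  ∀ (x : E') (y t s : ℝ), 0 ≤ t → t ≤ s → |y| * t ≤ G x y ‖x‖ t s

/-- A supersolution: main inequality + boundary inequality. -/
def Supersolution (W : Set (ι → E')) (φ : (ι → E') → ι → ℝ) (α : ℝ)
    (G : E' → ℝ → ℝ → ℝ → ℝ → ℝ) : Prop :=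
  MainInequality W φ α G ∧ BoundaryIneq G

end Normed

section GroupSetting

/-- The group `G = (ℤ/μ)^d`, identified with the branching index set `{1, …, m}`, `m = μ^d`. -/
abbrev Gp (μ d : ℕ) : Type := Fin d → ZMod μ

/-- The character value `e^{2πi z/μ}` for `z ∈ ℤ/μ`. -/
def ch (μ : ℕ) (z : ZMod μ) : ℂ :=
  Complex.exp (2 * Real.pi * Complex.I * (z.val : ℂ) / (μ : ℂ))

/-- The standard generators `e_j` of `(ℤ/μ)^d`. -/
def egen (μ d : ℕ) (j : Fin d) : Gp μ d := Pi.single j 1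

variable (μ d : ℕ) [NeZero μ]

/-- The martingale analogue `W_∇` of the space `BV(ℝ^d)`: discrete gradients of real-valued
functions on `G`. -/
def Wgrad : Set (Gp μ d → EuclideanSpace ℂ (Fin d)) :=
  {g | (∑ x, g x = 0) ∧
    ∃ f : Gp μ d → ℝ, ∀ (x : Gp μ d) (j : Fin d),
      g x j = (f (x + egen μ d j) : ℂ) - (f x : ℂ)}

/-- The martingale analogue `W_div` of the space of divergence-free measures. -/
def Wdiv : Set (Gp μ d → EuclideanSpace ℂ (Fin d)) :=
  {g | (∑ x, g x = 0) ∧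
    ∀ x : Gp μ d, ∑ j, (g (x + egen μ d j) j - g x j) = 0}

/-- The Hermitian inner product `⟨u, v⟩ = ∑_j conj(u_j) v_j` on `ℂ^d`. -/
def hermC (u v : EuclideanSpace ℂ (Fin d)) : ℂ :=
  ∑ j, (starRingEnd ℂ) (u j) * v j

/-- The translation invariant (convolution) operator `φ[f](x) = ∑_y ⟨K(x-y), f(y)⟩`. -/
def convOp (K : Gp μ d → EuclideanSpace ℂ (Fin d))
    (f : Gp μ d → EuclideanSpace ℂ (Fin d)) (x : Gp μ d) : ℂ :=
  ∑ y, hermC d (K (x - y)) (f y)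

end GroupSetting

section Fourier

variable (μ d l : ℕ) [NeZero μ]

/-- The Fourier transform `f̂(γ) = ∑_x e^{-2πi(γ·x)/μ} f(x)` on `G = (ℤ/μ)^d`. -/
def fhat (f : Gp μ d → EuclideanSpace ℂ (Fin l)) (γ : Gp μ d) : EuclideanSpace ℂ (Fin l) :=
  ∑ x, ch μ (-(∑ j, γ j * x j)) • f x

/-- The translation invariant space determined by the Fourier-side subspaces `Ω(γ)`:
`W = {f ∈ V ⊗ ℂ^l : f̂(γ) ∈ Ω(γ) for all γ}`. -/
def WofOmega (Ω : Gp μ d → Submodule ℂ (EuclideanSpace ℂ (Fin l))) :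
    Set (Gp μ d → EuclideanSpace ℂ (Fin l)) :=
  {f | (∑ x, f x = 0) ∧ ∀ γ : Gp μ d, fhat μ d l f γ ∈ Ω γ}

/-- `v ⊗ a` is an extremal vector of `W ⊆ V ⊗ ℂ^l` (order `α`) with support `H ⊆ G`. -/
def IsExtremalL (W : Set (Gp μ d → EuclideanSpace ℂ (Fin l))) (α : ℝ)
    (v : Gp μ d → ℝ) (a : EuclideanSpace ℂ (Fin l)) (H : Finset (Gp μ d)) : Prop :=
  a ≠ 0 ∧ (fun x => v x • a) ∈ W ∧
    (H.card : ℝ) = ((μ : ℝ) ^ d) ^ ((1 : ℝ) - α) ∧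
    (∀ x ∈ H, v x = ((μ : ℝ) ^ d) ^ α - 1) ∧ ∀ x ∉ H, v x = -1

end Fourier


/-! If `v ⊗ a ∈ W`, then `v̂(γ) ≠ 0` forces `a ∈ Ω(γ)`, and since `v̂(-γ)` is the conjugate of
`v̂(γ)` also `a ∈ Ω(-γ)`. Hence the Fourier transform of `1 + v ≥ 0` lives on at most `μ^k`
frequencies, each coefficient of modulus at most `m`, and Fourier inversion gives `1 + v ≤ μ^k`;
this bounds `κ_v(θ)` by `k (log μ) (1 - θ)`. The bound is attained by `v = μ^k 𝟙_{Γ^⊥} - 1`, whose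
Fourier transform `m 𝟙_{Γ \ {0}}` is supported where `a ∈ Ω`. -/

section Characters

variable {μ d : ℕ} [NeZero μ]

lemma ch_eq_stdAddChar (z : ZMod μ) : ch μ z = ZMod.stdAddChar z := by
  rw [ch, ZMod.stdAddChar_apply, ZMod.toCircle_apply]

lemma ch_zero : ch μ 0 = 1 := by
  rw [ch_eq_stdAddChar, AddChar.map_zero_eq_one]

lemma ch_add (z w : ZMod μ) : ch μ (z + w) = ch μ z * ch μ w := by
  simp only [ch_eq_stdAddChar, AddChar.map_add_eq_mul]

lemma ch_neg (z : ZMod μ) : ch μ (-z) = starRingEnd ℂ (ch μ z) := by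
  simp only [ch_eq_stdAddChar, AddChar.map_neg_eq_conj]

lemma norm_ch (z : ZMod μ) : ‖ch μ z‖ = 1 := by
  rw [ch_eq_stdAddChar, ZMod.stdAddChar_apply, Circle.norm_coe]

lemma ch_eq_one_iff (z : ZMod μ) : ch μ z = 1 ↔ z = 0 := by
  rw [ch_eq_stdAddChar, ← (ZMod.stdAddChar (N := μ)).map_zero_eq_one,
    ZMod.injective_stdAddChar.eq_iff]

def pairingChar (x : Gp μ d) : AddChar (Gp μ d) ℂ :=
  (ZMod.stdAddChar (N := μ)).compAddMonoidHom
    (AddMonoidHom.mk' (· ⬝ᵥ x) fun γ η => add_dotProduct γ η x)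

lemma pairingChar_apply (x γ : Gp μ d) : pairingChar x γ = ch μ (γ ⬝ᵥ x) :=
  (ch_eq_stdAddChar _).symm

lemma card_Gp : Fintype.card (Gp μ d) = μ ^ d := by
  simp [ZMod.card]

lemma sum_ch_dotProduct (x : Gp μ d) :
    ∑ γ : Gp μ d, ch μ (γ ⬝ᵥ x) = if x = 0 then (μ ^ d : ℂ) else 0 := by
  have htriv : pairingChar x = 0 ↔ x = 0 := by
    refine ⟨fun h => funext fun j => ?_, fun h => ?_⟩
    · have hj := DFunLike.congr_fun h (Pi.single j 1)
      rwa [pairingChar_apply, AddChar.zero_apply, ch_eq_one_iff, single_dotProduct,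
        one_mul] at hj
    · ext γ
      rw [pairingChar_apply, AddChar.zero_apply, ch_eq_one_iff, h, dotProduct_zero]
  simp only [← pairingChar_apply, AddChar.sum_eq_ite, htriv, card_Gp, Nat.cast_pow]

open Classical in
lemma sum_subgroup_ch_dotProduct (Γ : AddSubgroup (Gp μ d)) [Fintype Γ] (x : Gp μ d) :
    ∑ γ : Γ, ch μ ((γ : Gp μ d) ⬝ᵥ x) =
      if ∀ γ ∈ Γ, γ ⬝ᵥ x = 0 then (Nat.card Γ : ℂ) else 0 := by
  have htriv : (pairingChar x).compAddMonoidHom Γ.subtype = 0 ↔ ∀ γ ∈ Γ, γ ⬝ᵥ x = 0 := by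
    simp only [DFunLike.ext_iff, AddChar.compAddMonoidHom_apply, AddChar.zero_apply,
      pairingChar_apply, ch_eq_one_iff, Subtype.forall, AddSubgroup.coe_subtype]
  have := AddChar.sum_eq_ite ((pairingChar x).compAddMonoidHom Γ.subtype)
  simp only [AddChar.compAddMonoidHom_apply, AddSubgroup.coe_subtype, pairingChar_apply,
    htriv, Nat.card_eq_fintype_card] at this ⊢
  exact this

end Characters

section FourierTransform

variable {μ d : ℕ} [NeZero μ]

def vhat (v : Gp μ d → ℝ) (γ : Gp μ d) : ℂ :=
  ∑ x, ch μ (-(γ ⬝ᵥ x)) * v x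

lemma fhat_smul_const (l : ℕ) (v : Gp μ d → ℝ) (a : EuclideanSpace ℂ (Fin l)) (γ : Gp μ d) :
    fhat μ d l (fun x => v x • a) γ = vhat v γ • a := by
  simp only [fhat, vhat, Finset.sum_smul, mul_smul, Complex.coe_smul]
  rfl

lemma smul_const_mem_WofOmega_iff {l : ℕ} (Ω : Gp μ d → Submodule ℂ (EuclideanSpace ℂ (Fin l)))
    (v : Gp μ d → ℝ) (a : EuclideanSpace ℂ (Fin l)) :
    (fun x => v x • a) ∈ WofOmega μ d l Ω ↔ (∑ x, v x) • a = 0 ∧ ∀ γ, vhat v γ • a ∈ Ω γ := by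
  simp only [WofOmega, Set.mem_ofPred_eq, Finset.sum_smul, fhat_smul_const]

lemma vhat_zero (v : Gp μ d → ℝ) : vhat v 0 = ∑ x, v x := by
  simp [vhat, ch_zero]

lemma vhat_neg (v : Gp μ d → ℝ) (γ : Gp μ d) :
    vhat v (-γ) = starRingEnd ℂ (vhat v γ) := by
  simp only [vhat, map_sum, map_mul, Complex.conj_ofReal, ← ch_neg, neg_dotProduct]

lemma vhat_one_add (v : Gp μ d → ℝ) {γ : Gp μ d} (hγ : γ ≠ 0) :
    vhat (fun x => 1 + v x) γ = vhat v γ := by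
  have hconst : ∑ x : Gp μ d, ch μ (-(γ ⬝ᵥ x)) = 0 := by
    simp only [← neg_dotProduct, dotProduct_comm (-γ), sum_ch_dotProduct, neg_eq_zero, hγ,
      if_false]
  simp only [vhat, Complex.ofReal_add, Complex.ofReal_one, mul_add, mul_one,
    Finset.sum_add_distrib, hconst, zero_add]

lemma sum_ch_mul_vhat (v : Gp μ d → ℝ) (x : Gp μ d) :
    ∑ γ, ch μ (γ ⬝ᵥ x) * vhat v γ = (μ ^ d : ℂ) * v x := by
  have hkernel : ∀ y, ∑ γ : Gp μ d, ch μ (γ ⬝ᵥ x) * ch μ (-(γ ⬝ᵥ y)) =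
      if y = x then (μ ^ d : ℂ) else 0 := by
    intro y
    simp only [← ch_add, ← sub_eq_add_neg, ← dotProduct_sub, sum_ch_dotProduct, sub_eq_zero,
      eq_comm]
  simp only [vhat, Finset.mul_sum, ← mul_assoc]
  rw [Finset.sum_comm]
  simp only [← Finset.sum_mul, hkernel, ite_mul, zero_mul, Finset.sum_ite_eq', Finset.mem_univ,
    if_true]

lemma norm_vhat_le (v : Gp μ d → ℝ) (hv : ∀ x, 0 ≤ v x) (γ : Gp μ d) :
    ‖vhat v γ‖ ≤ ∑ x, v x :=
  (norm_sum_le _ _).trans_eq <| Finset.sum_congr rfl fun x _ => by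
    rw [norm_mul, norm_ch, one_mul, Complex.norm_real, Real.norm_of_nonneg (hv x)]

lemma mul_le_card_support_vhat_mul_sum (w : Gp μ d → ℝ) (hw : ∀ x, 0 ≤ w x) (x : Gp μ d) :
    (μ ^ d : ℝ) * w x ≤ #{γ | vhat w γ ≠ 0} * ∑ y, w y := by
  calc (μ ^ d : ℝ) * w x = ‖∑ γ, ch μ (γ ⬝ᵥ x) * vhat w γ‖ := by
        rw [sum_ch_mul_vhat, norm_mul, norm_pow, Complex.norm_natCast, Complex.norm_real,
          Real.norm_of_nonneg (hw x)]
    _ ≤ ∑ γ, ‖vhat w γ‖ :=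
        (norm_sum_le _ _).trans_eq <| by simp only [norm_mul, norm_ch, one_mul]
    _ = ∑ γ with vhat w γ ≠ 0, ‖vhat w γ‖ := by
        rw [Finset.sum_filter_of_ne fun γ _ h => norm_ne_zero_iff.mp h]
    _ ≤ #{γ | vhat w γ ≠ 0} * ∑ y, w y := by
        rw [← nsmul_eq_mul]
        exact Finset.sum_le_card_nsmul _ _ _ fun γ _ => norm_vhat_le w hw γ

end FourierTransform

section KappaV

variable {ι : Type} [Fintype ι] [Nonempty ι]

lemma log_le_log_of_one_le {x y : ℝ} (hx : 0 ≤ x) (hxy : x ≤ y) (hy : 1 ≤ y) :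
    Real.log x ≤ Real.log y := by
  rcases hx.eq_or_lt with rfl | hx
  · rw [Real.log_zero]
    exact Real.log_nonneg hy
  · exact Real.log_le_log hx hxy

/-- The mean of `w^p` with `p ≥ 1` is at most `M^(p-1)` times the mean of `w ≤ M`. -/
lemma kappaV_le_log_mul (v : ι → ℝ) {M : ℝ} (hM : 1 ≤ M) (h0 : ∀ j, 0 ≤ 1 + v j)
    (hle : ∀ j, 1 + v j ≤ M) (hsum : ∑ j, v j = 0) {θ : ℝ} (hθ : θ ∈ Set.Icc (0 : ℝ) 1) :
    kappaV ι v θ ≤ Real.log M * (1 - θ) := by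
  obtain ⟨hθ0, hθ1⟩ := hθ
  rcases hθ0.eq_or_lt with rfl | hθ
  · rw [kappaV, if_pos rfl, sub_zero, mul_one]
    refine log_le_log_of_one_le ?_ (ciSup_le fun j => ?_) hM
    · exact le_ciSup_of_le (Set.finite_range _).bddAbove (Classical.arbitrary ι) (abs_nonneg _)
    · exact (abs_of_nonneg (h0 j)).trans_le (hle j)
  · rw [kappaV, if_neg hθ.ne']
    have hexp : 0 ≤ 1 / θ - 1 := by
      rw [sub_nonneg, le_div_iff₀ hθ, one_mul]
      exact hθ1
    have hterm : ∀ j, |1 + v j| ^ (1 / θ) ≤ M ^ (1 / θ - 1) * (1 + v j) := fun j => by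
      rw [abs_of_nonneg (h0 j)]
      calc (1 + v j) ^ (1 / θ) = (1 + v j) ^ (1 / θ - 1) * (1 + v j) ^ (1 : ℝ) := by
            rw [← Real.rpow_add' (h0 j) (by simp [hθ.ne']), sub_add_cancel]
        _ ≤ M ^ (1 / θ - 1) * (1 + v j) := by
            rw [Real.rpow_one]
            exact mul_le_mul_of_nonneg_right (Real.rpow_le_rpow (h0 j) (hle j) hexp) (h0 j)
    have hmean : (Fintype.card ι : ℝ)⁻¹ * ∑ j, |1 + v j| ^ (1 / θ) ≤ M ^ (1 / θ - 1) := by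
      have hcard : (0 : ℝ) < Fintype.card ι := Nat.cast_pos.mpr Fintype.card_pos
      rw [inv_mul_le_iff₀ hcard]
      calc ∑ j, |1 + v j| ^ (1 / θ) ≤ ∑ j, M ^ (1 / θ - 1) * (1 + v j) :=
            Finset.sum_le_sum fun j _ => hterm j
        _ = Fintype.card ι * M ^ (1 / θ - 1) := by
            rw [← Finset.mul_sum, Finset.sum_add_distrib, hsum, Finset.sum_const,
              Finset.card_univ, nsmul_one, add_zero, mul_comm]
    calc θ * Real.log ((Fintype.card ι : ℝ)⁻¹ * ∑ j, |1 + v j| ^ (1 / θ))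
        ≤ θ * Real.log (M ^ (1 / θ - 1)) :=
          mul_le_mul_of_nonneg_left (log_le_log_of_one_le (by positivity) hmean
            (Real.one_le_rpow hM hexp)) hθ.le
      _ = Real.log M * (1 - θ) := by
          rw [Real.log_rpow (by linarith)]
          field_simp

lemma kappaV_eq_log_mul (v : ι → ℝ) {M : ℝ} (hM : 0 < M) (hv : ∀ j, 1 + v j = 0 ∨ 1 + v j = M)
    (hsum : ∑ j, v j = 0) (θ : ℝ) : kappaV ι v θ = Real.log M * (1 - θ) := by
  set N : ℕ := #{j | 1 + v j = M}
  have hone_add : ∀ j, 1 + v j = if 1 + v j = M then M else 0 := fun j => by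
    rcases hv j with h | h <;> simp [h]
  have hcard : (Fintype.card ι : ℝ) = N * M := by
    have h := Finset.sum_congr rfl fun j (_ : j ∈ Finset.univ) => hone_add j
    rwa [Finset.sum_add_distrib, hsum, Finset.sum_const, Finset.card_univ, nsmul_one,
      add_zero, Finset.sum_ite, Finset.sum_const_zero, add_zero, Finset.sum_const,
      nsmul_eq_mul] at h
  have hN : (0 : ℝ) < N := by
    have : (0 : ℝ) < Fintype.card ι := Nat.cast_pos.mpr Fintype.card_pos
    rw [hcard] at this
    exact pos_of_mul_pos_left this hM.le
  rcases eq_or_ne θ 0 with rfl | hθ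
  · rw [kappaV, if_pos rfl, sub_zero, mul_one]
    obtain ⟨j₀, hj₀⟩ : ∃ j, 1 + v j = M := by
      by_contra! h
      simp [N, h] at hN
    congr 1
    refine le_antisymm (ciSup_le fun j => ?_) ?_
    · rcases hv j with h | h <;> simp [h, abs_of_pos hM, hM.le]
    · exact le_ciSup_of_le (Set.finite_range _).bddAbove j₀ (by rw [hj₀, abs_of_pos hM])
  · rw [kappaV, if_neg hθ]
    have hpow : ∀ j, |1 + v j| ^ (1 / θ) = if 1 + v j = M then M ^ (1 / θ) else 0 := fun j => by
      rcases hv j with h | h <;>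
        simp [h, hM.ne, abs_of_pos hM, Real.zero_rpow (inv_ne_zero hθ)]
    rw [Finset.sum_congr rfl fun j _ => hpow j, Finset.sum_ite, Finset.sum_const_zero, add_zero,
      Finset.sum_const, nsmul_eq_mul, hcard]
    have hmean : ((N : ℝ) * M)⁻¹ * (N * M ^ (1 / θ)) = M ^ (1 / θ - 1) := by
      rw [Real.rpow_sub hM, Real.rpow_one]
      field_simp
    rw [hmean, Real.log_rpow hM]
    field_simp

end KappaV

section Geometric

variable {μ d l : ℕ} [NeZero μ] {Ω : Gp μ d → Submodule ℂ (EuclideanSpace ℂ (Fin l))}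

/-- `1 + v` is nonnegative with mean one, and its Fourier transform is supported in
`{0} ∪ (Ω⁻¹(a) ∩ -Ω⁻¹(a))` because `v̂(-γ) = conj v̂(γ)`. -/
lemma one_add_le_of_mem_MW {k : ℕ}
    (hsmall : ∀ a : EuclideanSpace ℂ (Fin l), a ≠ 0 →
      ({γ : Gp μ d | a ∈ Ω γ ∧ a ∈ Ω (-γ)}).ncard ≤ μ ^ k - 1)
    {v : Gp μ d → ℝ} (hv : v ∈ MW (WofOmega μ d l Ω)) (x : Gp μ d) :
    1 + v x ≤ (μ : ℝ) ^ k := by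
  classical
  obtain ⟨hsum, hge, a, ha, hW⟩ := hv
  have hmem : ∀ γ, vhat v γ ≠ 0 → a ∈ Ω γ := fun γ h =>
    ((Ω γ).smul_mem_iff h).mp (((smul_const_mem_WofOmega_iff Ω v a).mp hW).2 γ)
  set w : Gp μ d → ℝ := fun y => 1 + v y
  have hw : ∀ y, 0 ≤ w y := fun y => by linarith [hge y]
  have hwsum : ∑ y, w y = (μ : ℝ) ^ d := by
    simp only [w, Finset.sum_add_distrib, hsum, Finset.sum_const, Finset.card_univ, card_Gp,
      nsmul_one, add_zero, Nat.cast_pow]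
  have hsupp : ({γ | vhat w γ ≠ 0} : Finset (Gp μ d)) ⊆
      insert 0 {γ | a ∈ Ω γ ∧ a ∈ Ω (-γ)}.toFinset := by
    intro γ hγ
    rcases eq_or_ne γ 0 with rfl | h0
    · exact Finset.mem_insert_self _ _
    · have hγ' : vhat v γ ≠ 0 := by
        simpa [w, vhat_one_add v h0] using hγ
      refine Finset.mem_insert_of_mem (Set.mem_toFinset.mpr ⟨hmem γ hγ', hmem (-γ) ?_⟩)
      rwa [vhat_neg, map_ne_zero]
  have hcard : #{γ | vhat w γ ≠ 0} ≤ μ ^ k := by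
    have h1 := (Finset.card_le_card hsupp).trans (Finset.card_insert_le _ _)
    rw [← Set.ncard_eq_toFinset_card'] at h1
    have h2 := hsmall a ha
    have h3 : 1 ≤ μ ^ k := Nat.one_le_pow _ _ (NeZero.pos μ)
    omega
  have hbound := mul_le_card_support_vhat_mul_sum w hw x
  rw [hwsum] at hbound
  have hcard' : (#{γ | vhat w γ ≠ 0} : ℝ) ≤ (μ : ℝ) ^ k := by exact_mod_cast hcard
  have hm : (0 : ℝ) < (μ : ℝ) ^ d := pow_pos (Nat.cast_pos.mpr (NeZero.pos μ)) d
  nlinarith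

open Classical in
def extremalFun (Γ : AddSubgroup (Gp μ d)) (x : Gp μ d) : ℝ :=
  if ∀ γ ∈ Γ, γ ⬝ᵥ x = 0 then Nat.card Γ - 1 else -1

lemma ofReal_extremalFun (Γ : AddSubgroup (Gp μ d)) [Fintype Γ] (x : Gp μ d) :
    (extremalFun Γ x : ℂ) = ∑ γ : Γ, ch μ ((γ : Gp μ d) ⬝ᵥ x) - 1 := by
  rw [sum_subgroup_ch_dotProduct, extremalFun]
  split_ifs <;> push_cast <;> ring

open Classical in
lemma vhat_extremalFun (Γ : AddSubgroup (Gp μ d)) (γ : Gp μ d) :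
    vhat (extremalFun Γ) γ = if γ ∈ Γ ∧ γ ≠ 0 then (μ ^ d : ℂ) else 0 := by
  have horth : ∀ η : Gp μ d, ∑ x, ch μ (η ⬝ᵥ x) = if η = 0 then (μ ^ d : ℂ) else 0 :=
    fun η => by simp only [dotProduct_comm η, sum_ch_dotProduct]
  have hterm : ∀ x, ch μ (-(γ ⬝ᵥ x)) * (extremalFun Γ x : ℂ) =
      ∑ γ' : Γ, ch μ (((γ' : Gp μ d) - γ) ⬝ᵥ x) - ch μ ((-γ) ⬝ᵥ x) := fun x => by
    rw [ofReal_extremalFun, mul_sub, mul_one, Finset.mul_sum, neg_dotProduct]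
    simp only [← ch_add, sub_dotProduct, neg_add_eq_sub]
  rw [vhat, Finset.sum_congr rfl fun x _ => hterm x, Finset.sum_sub_distrib, Finset.sum_comm]
  simp only [horth, sub_eq_zero, neg_eq_zero]
  have hsub : (∑ γ' : Γ, if (γ' : Gp μ d) = γ then (μ ^ d : ℂ) else 0) =
      if γ ∈ Γ then (μ ^ d : ℂ) else 0 := by
    split_ifs with hγ
    · simp_rw [← Subtype.ext_iff (a2 := ⟨γ, hγ⟩)]
      exact Fintype.sum_ite_eq' _ _
    · exact Finset.sum_eq_zero fun γ' _ => if_neg fun h : (γ' : Gp μ d) = γ => hγ (h ▸ γ'.2)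
  rw [hsub]
  by_cases hγ : γ ∈ Γ <;> by_cases h0 : γ = 0 <;> simp_all

lemma sum_extremalFun (Γ : AddSubgroup (Gp μ d)) : ∑ x, extremalFun Γ x = 0 := by
  have h := vhat_extremalFun Γ 0
  rw [vhat_zero, if_neg fun h => h.2 rfl] at h
  exact_mod_cast h

lemma extremalFun_mem_MW (Γ : AddSubgroup (Gp μ d)) {a : EuclideanSpace ℂ (Fin l)} (ha : a ≠ 0)
    (hΓ : ∀ γ ∈ Γ, γ ≠ 0 → a ∈ Ω γ) : extremalFun Γ ∈ MW (WofOmega μ d l Ω) := by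
  refine ⟨sum_extremalFun Γ, fun x => ?_, a, ha, (smul_const_mem_WofOmega_iff Ω _ a).mpr
    ⟨by rw [sum_extremalFun, zero_smul], fun γ => ?_⟩⟩
  · rw [extremalFun]
    split_ifs <;> linarith [(Nat.card Γ).cast_nonneg (α := ℝ)]
  · rw [vhat_extremalFun]
    split_ifs with h
    · exact (Ω γ).smul_mem _ (hΓ γ h.1 h.2)
    · rw [zero_smul]
      exact (Ω γ).zero_mem

lemma kappaV_extremalFun (Γ : AddSubgroup (Gp μ d)) (θ : ℝ) :
    kappaV (Gp μ d) (extremalFun Γ) θ = Real.log (Nat.card Γ) * (1 - θ) :=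
  kappaV_eq_log_mul _ (Nat.cast_pos.mpr Nat.card_pos)
    (fun x => by rw [extremalFun]; split_ifs <;> simp) (sum_extremalFun Γ) θ

end Geometric

theorem statement15_general (μ d l k : ℕ) [NeZero μ] (hd : 1 ≤ d)
    (Ω : Gp μ d → Submodule ℂ (EuclideanSpace ℂ (Fin l)))
    (hsmall : ∀ a : EuclideanSpace ℂ (Fin l), a ≠ 0 →
      ({γ : Gp μ d | a ∈ Ω γ ∧ a ∈ Ω (-γ)}).ncard ≤ μ ^ k - 1)
    (hex : ∃ a : EuclideanSpace ℂ (Fin l), a ≠ 0 ∧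
      ({γ : Gp μ d | a ∈ Ω γ ∧ a ∈ Ω (-γ)}).ncard = μ ^ k - 1 ∧
      ∃ Γ : AddSubgroup (Gp μ d), (Γ : Set (Gp μ d)).ncard = μ ^ k ∧
        {γ : Gp μ d | a ∈ Ω γ} = (Γ : Set (Gp μ d)) \ {0}) :
    ∀ θ ∈ Set.Icc (0 : ℝ) 1,
      kappa (WofOmega μ d l Ω) θ = ((k : ℝ) / d) * Real.log ((μ : ℝ) ^ d) * (1 - θ) := by
  intro θ hθ
  obtain ⟨a, ha, -, Γ, hΓcard, hΓ⟩ := hex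
  have hcardΓ : (Nat.card Γ : ℝ) = (μ : ℝ) ^ k := by
    rw [← Nat.cast_pow, ← hΓcard, ← Nat.card_coe_set_eq]
    rfl
  have haΓ : ∀ γ ∈ Γ, γ ≠ 0 → a ∈ Ω γ := fun γ hγ h0 =>
    (Set.ext_iff.mp hΓ γ).mpr ⟨hγ, h0⟩
  have hμ : (1 : ℝ) ≤ μ := Nat.one_le_cast.mpr (NeZero.pos μ)
  have hgreatest : IsGreatest {r | ∃ v ∈ MW (WofOmega μ d l Ω), r = kappaV (Gp μ d) v θ}
      (Real.log ((μ : ℝ) ^ k) * (1 - θ)) := by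
    refine ⟨⟨extremalFun Γ, extremalFun_mem_MW Γ ha haΓ, by rw [kappaV_extremalFun, hcardΓ]⟩, ?_⟩
    rintro r ⟨v, hv, rfl⟩
    exact kappaV_le_log_mul v (one_le_pow₀ hμ) (fun x => by linarith [hv.2.1 x])
      (one_add_le_of_mem_MW hsmall hv) hv.1 hθ
  have hd' : (d : ℝ) ≠ 0 := Nat.cast_ne_zero.mpr (by omega)
  rw [kappa, hgreatest.csSup_eq, Real.log_pow, Real.log_pow]
  field_simp

/-- Lemma `FourierLemma`: if `#(Ω⁻¹(a) ∩ (-Ω⁻¹(a))) ≤ μ^k - 1` for every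
`a ≠ 0`, with equality for some `a` for which `Ω⁻¹(a) = Γ \ {0}` with `Γ` a subgroup of
cardinality `μ^k`, then `W` is a geometric space of order `k/d`. -/
theorem statement15 (μ d l k : ℕ) [NeZero μ] (hμ : 2 ≤ μ) (hd : 1 ≤ d) (hl : 1 ≤ l)
    (hk : k ≤ d)
    (Ω : Gp μ d → Submodule ℂ (EuclideanSpace ℂ (Fin l))) (hΩ0 : Ω 0 = ⊥)
    (hsmall : ∀ a : EuclideanSpace ℂ (Fin l), a ≠ 0 →
      ({γ : Gp μ d | a ∈ Ω γ ∧ a ∈ Ω (-γ)}).ncard ≤ μ ^ k - 1)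
    (hex : ∃ a : EuclideanSpace ℂ (Fin l), a ≠ 0 ∧
      ({γ : Gp μ d | a ∈ Ω γ ∧ a ∈ Ω (-γ)}).ncard = μ ^ k - 1 ∧
      ∃ Γ : AddSubgroup (Gp μ d), (Γ : Set (Gp μ d)).ncard = μ ^ k ∧
        {γ : Gp μ d | a ∈ Ω γ} = (Γ : Set (Gp μ d)) \ {0}) :
    ∀ θ ∈ Set.Icc (0 : ℝ) 1,
      kappa (WofOmega μ d l Ω) θ = ((k : ℝ) / d) * Real.log ((μ : ℝ) ^ d) * (1 - θ) :=
  statement15_general μ d l k hd Ω hsmall hex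

end TracePaper
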